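/- Let φ:Γ↷^b(X,μ)→Γ↷^{ι_η}(Z,η) and ψ:Γ↷^d(Y,ν)→Γ↷^{ι_η}(Z,η) be factor maps from measure preserving actions b and d of a countable group Γ onto the identity action ι_η. Let μ = ∫_z μ_z dη and ν = ∫_z ν_z dη be the disintegrations of μ and ν via φ and ψ respectively, and set b_z = Γ↷^b(X,μ_z), d_z = Γ↷^d(Y,ν_z). Then: (1) if b_z ≺ d_z for all z ∈ Z then b ≺ d; (2) if b ≺ d_z for all z ∈ Z then ι_η×b ≺ d, and if b_z ≺ d for all z ∈ Z then b ≺ ι_η×d; (3) if b_z ∼ d_z for all z ∈ Z then b ∼ d, and if b ∼ d_z for all z ∈ Z then ι_η×b ∼ d. -/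

import Mathlib

open scoped NNReal ENNReal

/-- A measure preserving action of a group `Γ` on a standard probability space. -/
structure MPAction (Γ : Type) [Group Γ] where
  X : Type
  [mX : MeasurableSpace X]
  [sb : StandardBorelSpace X]
  μ : MeasureTheory.Measure X
  [prob : MeasureTheory.IsProbabilityMeasure μ]
  act : Γ → X → X
  one_act : ∀ x, act 1 x = x
  mul_act : ∀ γ δ x, act (γ * δ) x = act γ (act δ x)
  pres : ∀ γ : Γ, MeasureTheory.MeasurePreserving (act γ) μ μ

attribute [instance] MPAction.mX MPAction.sb MPAction.prob

open MeasureTheory Topology Filter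

variable {Γ : Type} [Group Γ]

/-- A finite Borel partition of a space. -/
def IsPartition {X : Type} [MeasurableSpace X] {k : ℕ} (A : Fin k → Set X) : Prop :=
  (∀ i, MeasurableSet (A i)) ∧ (∀ i j, i ≠ j → Disjoint (A i) (A j)) ∧ (⋃ i, A i) = Set.univ

/-- Weak containment of a measure preserving action in an action on a (possibly
nonstandard) measure space, expressed at the level of the underlying data. -/
def WCgen {X Y : Type} [MeasurableSpace X] [MeasurableSpace Y]
    (actA : Γ → X → X) (μ : Measure X) (actB : Γ → Y → Y) (ν : Measure Y) : Prop :=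
  ∀ (k : ℕ) (A : Fin k → Set X), IsPartition A →
    ∀ (F : Finset Γ) (ε : ℝ), 0 < ε →
      ∃ B : Fin k → Set Y, IsPartition B ∧
        ∀ γ ∈ F, ∀ i j : Fin k,
          |(μ (actA γ '' A i ∩ A j)).toReal - (ν (actB γ '' B i ∩ B j)).toReal| < ε

/-- Weak containment `a ≺ b` of measure preserving actions. -/
def MPAction.WC (a b : MPAction Γ) : Prop := WCgen a.act a.μ b.act b.μ

/-- Weak equivalence `a ∼ b` of measure preserving actions. -/
def MPAction.WE (a b : MPAction Γ) : Prop := a.WC b ∧ b.WC a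

/-- The diagonal product of two measure preserving actions. -/
noncomputable def MPAction.prod (a b : MPAction Γ) : MPAction Γ where
  X := a.X × b.X
  μ := a.μ.prod b.μ
  act γ p := (a.act γ p.1, b.act γ p.2)
  one_act p := by cases p with | mk x y => simp [a.one_act, b.one_act]
  mul_act γ δ p := by cases p with | mk x y => simp [a.mul_act, b.mul_act]
  pres γ := (a.pres γ).prod (b.pres γ)

/-- The trivial (identity) action of `Γ` on a standard probability space `(Z, η)`. -/
def trivialAction (Γ : Type) [Group Γ] (Z : Type) [MeasurableSpace Z] [StandardBorelSpace Z]
    (η : Measure Z) [IsProbabilityMeasure η] : MPAction Γ where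
  X := Z
  μ := η
  act _ z := z
  one_act _ := rfl
  mul_act _ _ _ := rfl
  pres _ := MeasurePreserving.id η

/-- Ergodicity: every invariant Borel set is null or conull. -/
def MPAction.IsErgodic (a : MPAction Γ) : Prop :=
  ∀ A : Set a.X, MeasurableSet A → (∀ γ : Γ, a.act γ ⁻¹' A = A) → a.μ A = 0 ∨ a.μ A = 1

/-- Freeness: for every nonidentity group element, the set of fixed points is null. -/
def MPAction.IsFree (a : MPAction Γ) : Prop :=
  ∀ γ : Γ, γ ≠ 1 → a.μ {x | a.act γ x = x} = 0

/-- Strong ergodicity: every asymptotically invariant sequence of Borel sets is trivial. -/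
def MPAction.IsStronglyErgodic (b : MPAction Γ) : Prop :=
  ∀ B : ℕ → Set b.X, (∀ n, MeasurableSet (B n)) →
    (∀ γ : Γ, Tendsto (fun n => (b.μ (symmDiff (b.act γ '' B n) (B n))).toReal) atTop (nhds 0)) →
    Tendsto (fun n => (b.μ (B n)).toReal * (1 - (b.μ (B n)).toReal)) atTop (nhds 0)

/-- Stable weak containment: `a ≺ ι × b` where `ι` is the trivial action on a standard
non-atomic probability space. -/
def MPAction.SWC (a b : MPAction Γ) : Prop :=
  ∀ (Z : Type) [MeasurableSpace Z] [StandardBorelSpace Z] (η : Measure Z)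
    [IsProbabilityMeasure η] [NullSingletonClass η],
    a.WC ((trivialAction Γ Z η).prod b)

/-- Stable weak equivalence. -/
def MPAction.SWE (a b : MPAction Γ) : Prop := a.SWC b ∧ b.SWC a

/-- Amenability: existence of a left-invariant finitely additive probability measure on
all subsets of the group. -/
def IsAmenable (Γ : Type) [Group Γ] : Prop :=
  ∃ m : Set Γ → ℝ, (∀ A, 0 ≤ m A) ∧ m Set.univ = 1 ∧
    (∀ A B : Set Γ, Disjoint A B → m (A ∪ B) = m A + m B) ∧
    (∀ (γ : Γ) (A : Set Γ), m ((γ * ·) '' A) = m A)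
open MeasureTheory Topology Filter

/-- `a` is a factor of `d` via the map `φ`: `φ` is measurable, measure preserving and
almost everywhere equivariant. -/
def IsFactorVia {Γ : Type} [Group Γ] (d a : MPAction Γ) (φ : d.X → a.X) : Prop :=
  Measurable φ ∧ Measure.map φ d.μ = a.μ ∧
    ∀ γ : Γ, ∀ᵐ y ∂d.μ, φ (d.act γ y) = a.act γ (φ y)

/-- `νz` is the disintegration of the measure of `d` over `(Z, η)` with respect to the
map `π`: an (essentially unique) measurable family of Borel probability measures `νz z`
with `νz z (π⁻¹{z}) = 1` a.e. and `d.μ = ∫ νz z dη`. -/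
def IsDisintegration {Γ : Type} [Group Γ] (d : MPAction Γ) {Z : Type} [MeasurableSpace Z]
    (η : Measure Z) (π : d.X → Z) (νz : Z → Measure d.X) : Prop :=
  (∀ z, IsProbabilityMeasure (νz z)) ∧
  (∀ B : Set d.X, MeasurableSet B → Measurable fun z => νz z B) ∧
  (∀ᵐ z ∂η, νz z (π ⁻¹' {z}) = 1) ∧
  (∀ B : Set d.X, MeasurableSet B → d.μ B = ∫⁻ z, νz z B ∂η)

/-! Weak containment is tested one finite partition at a time. Witnesses on `Y` can be drawn
from one countable family of partitions (disjointifications of tuples from a countable generating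
algebra), so for every fibre `z` the first member of the family witnessing `b_z ≺ d_z` is a
measurable function of `z`. Gluing these choices along `ψ` gives a single partition of `Y`; as `ψ`
is almost invariant, its statistics in `ν_z` are those of the chosen witness, and integrating the
fibrewise estimates over `η` gives `b ≺ d`. The product `ι_η × b` disintegrates over the first
coordinate into copies of `b`, which reduces (2) and (3) to the argument for (1). -/

open scoped symmDiff
open Set

namespace MPAction

variable (a : MPAction Γ)

theorem act_inv_act (γ : Γ) (x : a.X) : a.act γ⁻¹ (a.act γ x) = x := by
  rw [← a.mul_act, inv_mul_cancel, a.one_act]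

theorem act_act_inv (γ : Γ) (x : a.X) : a.act γ (a.act γ⁻¹ x) = x := by
  rw [← a.mul_act, mul_inv_cancel, a.one_act]

theorem image_act (γ : Γ) : image (a.act γ) = preimage (a.act γ⁻¹) :=
  image_eq_preimage_of_inverse (a.act_inv_act γ) (a.act_act_inv γ)

theorem measurable_act (γ : Γ) : Measurable (a.act γ) := (a.pres γ).measurable

theorem measurableSet_image_act (γ : Γ) {s : Set a.X} (hs : MeasurableSet s) :
    MeasurableSet (a.act γ '' s) := by
  rw [image_act]
  exact a.measurable_act γ⁻¹ hs

theorem measurableSet_image_act_inter {k : ℕ} {A : Fin k → Set a.X} (hA : IsPartition A)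
    (γ : Γ) (i j : Fin k) : MeasurableSet (a.act γ '' A i ∩ A j) :=
  (a.measurableSet_image_act γ (hA.1 i)).inter (hA.1 j)

theorem preimage_image_act_inter {a a' : MPAction Γ} {π : a'.X → a.X}
    (hπ : ∀ γ y, π (a'.act γ y) = a.act γ (π y)) (γ : Γ) (s t : Set a.X) :
    π ⁻¹' (a.act γ '' s ∩ t) = a'.act γ '' (π ⁻¹' s) ∩ π ⁻¹' t := by
  ext y
  simp [image_act, hπ]

end MPAction

section Partitions

variable {X Y : Type}

theorem IsPartition.exists_eq_succ [MeasurableSpace X] [Nonempty X] {k : ℕ} {A : Fin k → Set X}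
    (hA : IsPartition A) : ∃ n, k = n + 1 := by
  obtain ⟨i, -⟩ := mem_iUnion.1 (hA.2.2 ▸ mem_univ (Classical.arbitrary X))
  exact Nat.exists_eq_add_one.2 i.pos

theorem IsPartition.preimage [MeasurableSpace X] [MeasurableSpace Y] {k : ℕ}
    {A : Fin k → Set Y} (hA : IsPartition A) {f : X → Y} (hf : Measurable f) :
    IsPartition fun i => f ⁻¹' A i :=
  ⟨fun i => hf (hA.1 i), fun i j hij => (hA.2.1 i j hij).preimage f,
    by rw [← preimage_iUnion, hA.2.2, preimage_univ]⟩

theorem isPartition_glue [MeasurableSpace Y] {k : ℕ} {Q : ℕ → Fin k → Set Y}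
    (hQ : ∀ n, IsPartition (Q n)) {f : Y → ℕ} (hf : Measurable f) :
    IsPartition fun i => {y | y ∈ Q (f y) i} := by
  refine ⟨fun i => ?_, fun i j hij => disjoint_left.2 fun y hi hj => ?_, ?_⟩
  · change MeasurableSet {y | y ∈ Q (f y) i}
    rw [show {y | y ∈ Q (f y) i} = ⋃ n, f ⁻¹' {n} ∩ Q n i by ext; simp]
    exact .iUnion fun n => (hf (measurableSet_singleton n)).inter ((hQ n).1 i)
  · exact ((hQ (f y)).2.1 i j hij).notMem_of_mem_left hi hj
  · refine eq_univ_of_forall fun y => ?_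
    obtain ⟨i, hi⟩ := mem_iUnion.1 ((hQ (f y)).2.2 ▸ mem_univ y)
    exact mem_iUnion.2 ⟨i, hi⟩

/-- Cells `C i \ ⋃ j < i, C j`, except that the last cell absorbs all points not covered by the
others. -/
def disjointedPartition {k : ℕ} (C : Fin (k + 1) → Set Y) : Fin (k + 1) → Set Y :=
  disjointed (Function.update C (Fin.last k) univ)

theorem mem_disjointedPartition {k : ℕ} {C : Fin (k + 1) → Set Y} {i : Fin (k + 1)} {y : Y} :
    y ∈ disjointedPartition C i ↔
      (i ≠ Fin.last k → y ∈ C i) ∧ ∀ j < i, y ∉ C j := by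
  have hlt : ∀ j < i, j ≠ Fin.last k := fun j hj => (hj.trans_le (Fin.le_last i)).ne
  rw [disjointedPartition, disjointed_eq_inter_compl]
  by_cases hi : i = Fin.last k <;> simp +contextual [hi, Function.update_of_ne (hlt _ _)]

theorem isPartition_disjointedPartition [MeasurableSpace Y] {k : ℕ} {C : Fin (k + 1) → Set Y}
    (hC : ∀ i, MeasurableSet (C i)) : IsPartition (disjointedPartition C) := by
  have hC' : ∀ j, MeasurableSet (Function.update C (Fin.last k) univ j) := fun j => by
    rcases eq_or_ne j (Fin.last k) with rfl | hj
    · simp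
    · simpa [hj] using hC j
  refine ⟨fun i => ?_, fun i j hij => disjoint_disjointed _ hij, ?_⟩
  · rw [disjointedPartition, disjointed_eq_inter_compl]
    exact (hC' i).inter (.iInter fun j => .iInter fun _ => (hC' j).compl)
  · rw [disjointedPartition, iUnion_disjointed]
    exact eq_univ_of_forall fun y => mem_iUnion.2 ⟨Fin.last k, by simp⟩

theorem symmDiff_disjointedPartition_subset [MeasurableSpace Y] {k : ℕ}
    {B : Fin (k + 1) → Set Y} (hB : IsPartition B) (C : Fin (k + 1) → Set Y) (i : Fin (k + 1)) :
    B i ∆ disjointedPartition C i ⊆ ⋃ j, B j ∆ C j := by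
  intro y hy
  by_contra! hC
  simp only [mem_iUnion, not_exists, mem_symmDiff, not_or, not_and_not_right] at hC
  have hBC : ∀ j, y ∈ B j ↔ y ∈ C j := fun j => ⟨(hC j).1, (hC j).2⟩
  obtain ⟨m, hm⟩ := mem_iUnion.1 (hB.2.2 ▸ mem_univ y)
  have hB_iff : ∀ j, y ∈ B j ↔ j = m := fun j =>
    ⟨fun hj => by_contra fun hjm => (hB.2.1 j m hjm).notMem_of_mem_left hj hm, (· ▸ hm)⟩
  rw [mem_symmDiff, mem_disjointedPartition] at hy
  rcases hy with ⟨hyB, hyD⟩ | ⟨⟨hyC, hyD⟩, hyB⟩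
  · rw [hB_iff] at hyB
    subst hyB
    exact hyD ⟨fun _ => (hBC i).1 hm, fun j hj hyj =>
      hj.ne ((hB_iff j).1 ((hBC j).2 hyj))⟩
  · rw [hB_iff] at hyB
    by_cases hi : i = Fin.last k
    · subst hi
      exact hyD m (lt_of_le_of_ne (Fin.le_last m) (Ne.symm hyB)) ((hBC m).1 hm)
    · exact hyB ((hB_iff i).1 ((hBC i).2 (hyC hi)))

end Partitions

section Statistics

variable {X Y : Type} [MeasurableSpace X] [MeasurableSpace Y]

def StatsClose (actA : Γ → X → X) (μ : Measure X) {k : ℕ} (A : Fin k → Set X)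
    (actB : Γ → Y → Y) (ν : Measure Y) (B : Fin k → Set Y) (F : Finset Γ) (ε : ℝ) : Prop :=
  ∀ γ ∈ F, ∀ i j, |(μ (actA γ '' A i ∩ A j)).toReal - (ν (actB γ '' B i ∩ B j)).toReal| < ε

theorem measurableSet_setOf_statsClose {Γ Z : Type} [MeasurableSpace Z] {actA : Γ → X → X}
    {actB : Γ → Y → Y} {μz : Z → Measure X} {νz : Z → Measure Y} (hμz : Measurable μz)
    (hνz : Measurable νz) {k : ℕ} {A : Fin k → Set X} {B : Fin k → Set Y}
    (hA : ∀ γ i j, MeasurableSet (actA γ '' A i ∩ A j))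
    (hB : ∀ γ i j, MeasurableSet (actB γ '' B i ∩ B j)) (F : Finset Γ) (ε : ℝ) :
    MeasurableSet {z | StatsClose actA (μz z) A actB (νz z) B F ε} := by
  have : {z | StatsClose actA (μz z) A actB (νz z) B F ε} = ⋂ γ ∈ F, ⋂ i, ⋂ j,
      {z | |(μz z (actA γ '' A i ∩ A j)).toReal - (νz z (actB γ '' B i ∩ B j)).toReal| < ε} := by
    ext; simp [StatsClose]
  rw [this]
  refine .biInter F.countable_toSet fun γ _ => .iInter fun i => .iInter fun j => ?_
  exact measurableSet_lt (((Measure.measurable_coe (hA γ i j)).comp hμz).ennreal_toReal.sub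
    ((Measure.measurable_coe (hB γ i j)).comp hνz).ennreal_toReal).abs measurable_const

theorem abs_measureReal_image_act_inter_sub_le (d : MPAction Γ) (ν : Measure d.X)
    [IsFiniteMeasure ν] (γ : Γ) {s s' t t' : Set d.X} (hs : MeasurableSet s)
    (hs' : MeasurableSet s') (ht : MeasurableSet t) (ht' : MeasurableSet t') :
    |ν.real (d.act γ '' s ∩ t) - ν.real (d.act γ '' s' ∩ t')| ≤
      (ν.map (d.act γ⁻¹)).real (s ∆ s') + ν.real (t ∆ t') := by
  simp only [d.image_act] at *
  have hmeas := d.measurable_act γ⁻¹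
  rw [map_measureReal_apply hmeas (hs.symmDiff hs'), preimage_symmDiff]
  refine (abs_measureReal_sub_le_measureReal_symmDiff ((hmeas hs).inter ht).nullMeasurableSet
    ((hmeas hs').inter ht').nullMeasurableSet).trans ?_
  refine (measureReal_mono fun y hy => ?_).trans (measureReal_union_le _ _)
  simp only [mem_symmDiff, mem_inter_iff, mem_union] at hy ⊢
  tauto

theorem exists_measureReal_symmDiff_disjointedPartition_lt {ρ : Measure Y} [IsFiniteMeasure ρ]
    {𝒮 : Set (Set Y)} (h𝒮 : ρ.MeasureDense 𝒮) {k : ℕ} {B : Fin (k + 1) → Set Y}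
    (hB : IsPartition B) {δ : ℝ} (hδ : 0 < δ) :
    ∃ C : Fin (k + 1) → Set Y, (∀ i, C i ∈ 𝒮) ∧
      ∀ i, ρ.real (B i ∆ disjointedPartition C i) < δ := by
  choose C hC𝒮 hCB using fun i =>
    h𝒮.approx (B i) (hB.1 i) (measure_ne_top ρ _) (δ / (k + 1)) (by positivity)
  refine ⟨C, hC𝒮, fun i => ?_⟩
  calc ρ.real (B i ∆ disjointedPartition C i) ≤ ρ.real (⋃ j, B j ∆ C j) :=
        measureReal_mono (symmDiff_disjointedPartition_subset hB C i)
    _ ≤ ∑ j, ρ.real (B j ∆ C j) := measureReal_iUnion_fintype_le _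
    _ < ∑ _j : Fin (k + 1), δ / (k + 1) :=
        Finset.sum_lt_sum_of_nonempty Finset.univ_nonempty fun j _ =>
          ENNReal.toReal_lt_of_lt_ofReal (hCB j)
    _ = δ := by simp; field_simp

end Statistics

section CountableWitnesses

variable {X : Type} [MeasurableSpace X] {actA : Γ → X → X} {μ : Measure X}

theorem WCgen.exists_statsClose_disjointedPartition {d : MPAction Γ} {ν : Measure d.X}
    [IsFiniteMeasure ν] (h : WCgen actA μ d.act ν) {𝒮 : Set (Set d.X)} (h𝒮 : IsSetAlgebra 𝒮)
    (hgen : d.mX = MeasurableSpace.generateFrom 𝒮) {k : ℕ}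
    {A : Fin (k + 1) → Set X} (hA : IsPartition A) (F : Finset Γ) {ε : ℝ} (hε : 0 < ε) :
    ∃ C : Fin (k + 1) → Set d.X, (∀ i, C i ∈ 𝒮) ∧
      StatsClose actA μ A d.act ν (disjointedPartition C) F ε := by
  obtain ⟨B, hB, hAB⟩ := h _ A hA F (ε / 2) (half_pos hε)
  -- `ρ` controls the symmetric differences both before and after translation by `γ ∈ F`
  let ρ := ν + ∑ γ ∈ F, ν.map (d.act γ⁻¹)
  have hρ := Measure.MeasureDense.of_generateFrom_isSetAlgebra_finite ρ h𝒮 hgen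
  obtain ⟨C, hC𝒮, hBC⟩ :=
    exists_measureReal_symmDiff_disjointedPartition_lt hρ hB (δ := ε / 4) (by positivity)
  have hD := isPartition_disjointedPartition fun i => hρ.measurable _ (hC𝒮 i)
  refine ⟨C, hC𝒮, fun γ hγ i j => ?_⟩
  have hν : ∀ s, ν.real s ≤ ρ.real s := fun s =>
    ENNReal.toReal_mono (measure_ne_top ρ s) (Measure.le_add_right le_rfl s)
  have hνγ : ∀ s, (ν.map (d.act γ⁻¹)).real s ≤ ρ.real s := fun s =>
    ENNReal.toReal_mono (measure_ne_top ρ s)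
      ((Finset.single_le_sum (fun _ _ => Measure.zero_le _) hγ).trans
        (Measure.le_add_left le_rfl) s)
  calc _ ≤ |(μ (actA γ '' A i ∩ A j)).toReal - ν.real (d.act γ '' B i ∩ B j)| +
        |ν.real (d.act γ '' B i ∩ B j) - ν.real (d.act γ '' disjointedPartition C i ∩
          disjointedPartition C j)| := abs_sub_le _ _ _
    _ < ε / 2 + (ε / 4 + ε / 4) := by
        refine add_lt_add_of_lt_of_le (hAB γ hγ i j) ?_
        refine (abs_measureReal_image_act_inter_sub_le d ν γ (hB.1 i) (hD.1 i) (hB.1 j)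
          (hD.1 j)).trans (add_le_add ?_ ?_)
        exacts [((hνγ _).trans_lt (hBC i)).le, ((hν _).trans_lt (hBC j)).le]
    _ = ε := by ring

theorem exists_seq_isPartition_statsClose (d : MPAction Γ) (actA : Γ → X → X) (k : ℕ) :
    ∃ Q : ℕ → Fin (k + 1) → Set d.X, (∀ n, IsPartition (Q n)) ∧
      ∀ (μ : Measure X) (ν : Measure d.X) [IsFiniteMeasure ν], WCgen actA μ d.act ν →
        ∀ A : Fin (k + 1) → Set X, IsPartition A → ∀ (F : Finset Γ) (ε : ℝ), 0 < ε →
          ∃ n, StatsClose actA μ A d.act ν (Q n) F ε := by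
  let 𝒮 := generateSetAlgebra (MeasurableSpace.countableGeneratingSet d.X)
  have h𝒮 : IsSetAlgebra 𝒮 := isSetAlgebra_generateSetAlgebra
  have hgen : d.mX = MeasurableSpace.generateFrom 𝒮 := by
    rw [generateFrom_generateSetAlgebra_eq, MeasurableSpace.generateFrom_countableGeneratingSet]
  have : Countable 𝒮 :=
    (countable_generateSetAlgebra MeasurableSpace.countable_countableGeneratingSet).to_subtype
  have : Nonempty 𝒮 := ⟨⟨∅, h𝒮.empty_mem⟩⟩
  obtain ⟨v, hv⟩ := exists_surjective_nat (Fin (k + 1) → 𝒮)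
  refine ⟨fun n => disjointedPartition fun i => v n i, fun n => isPartition_disjointedPartition
    fun i => hgen ▸ MeasurableSpace.measurableSet_generateFrom (v n i).2, ?_⟩
  intro μ ν _ h A hA F ε hε
  obtain ⟨C, hC𝒮, hC⟩ := h.exists_statsClose_disjointedPartition h𝒮 hgen hA F hε
  obtain ⟨n, hn⟩ := hv fun i => ⟨C i, hC𝒮 i⟩
  exact ⟨n, by simpa [hn] using hC⟩

end CountableWitnesses

theorem abs_toReal_lintegral_sub_le {Z : Type} [MeasurableSpace Z] {η : Measure Z}
    [IsProbabilityMeasure η] {f g : Z → ℝ≥0∞} (hf : Measurable f) (hg : Measurable g)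
    (hf1 : ∀ z, f z ≤ 1) (hg1 : ∀ z, g z ≤ 1) {c : ℝ}
    (h : ∀ᵐ z ∂η, |(f z).toReal - (g z).toReal| ≤ c) :
    |(∫⁻ z, f z ∂η).toReal - (∫⁻ z, g z ∂η).toReal| ≤ c := by
  have htoReal : ∀ {f : Z → ℝ≥0∞}, Measurable f → (∀ z, f z ≤ 1) →
      Integrable (fun z => (f z).toReal) η ∧
        (∫⁻ z, f z ∂η).toReal = ∫ z, (f z).toReal ∂η := fun hf hf1 =>
    ⟨integrable_toReal_of_lintegral_ne_top hf.aemeasurable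
      (ne_top_of_le_ne_top (by simp) (lintegral_mono hf1)),
      (integral_toReal hf.aemeasurable
        (ae_of_all _ fun z => (hf1 z).trans_lt ENNReal.one_lt_top)).symm⟩
  rw [(htoReal hf hf1).2, (htoReal hg hg1).2,
    ← integral_sub (htoReal hf hf1).1 (htoReal hg hg1).1]
  simpa using norm_integral_le_of_norm_le_const (μ := η)
    (f := fun z => (f z).toReal - (g z).toReal) (by simpa only [Real.norm_eq_abs] using h)

namespace IsDisintegration

variable {d : MPAction Γ} {Z : Type} [MeasurableSpace Z] {η : Measure Z} {ψ : d.X → Z}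
  {νz : Z → Measure d.X}

theorem measurable (h : IsDisintegration d η ψ νz) : Measurable νz :=
  Measure.measurable_of_measurable_coe _ h.2.1

theorem eq_bind (h : IsDisintegration d η ψ νz) : d.μ = η.bind νz :=
  Measure.ext fun s hs => by rw [Measure.bind_apply hs h.measurable.aemeasurable, h.2.2.2 s hs]

theorem ae_ae_of_ae (h : IsDisintegration d η ψ νz) {p : d.X → Prop} (hp : ∀ᵐ y ∂d.μ, p y) :
    ∀ᵐ z ∂η, ∀ᵐ y ∂νz z, p y :=
  Measure.ae_ae_of_ae_bind h.measurable.aemeasurable (h.eq_bind ▸ hp)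

theorem ae_ae_eq [MeasurableSingletonClass Z] (h : IsDisintegration d η ψ νz)
    (hψ : Measurable ψ) :
    ∀ᵐ z ∂η, ∀ᵐ y ∂νz z, ψ y = z := by
  filter_upwards [h.2.2.1] with z hz
  have := h.1 z
  exact (ae_iff_measure_eq (hψ (measurableSet_singleton z)).nullMeasurableSet).2
    (hz.trans measure_univ.symm)

theorem ae_measure_image_act_inter_glue [StandardBorelSpace Z] [IsProbabilityMeasure η]
    (h : IsDisintegration d η ψ νz) (hψ : IsFactorVia d (trivialAction Γ Z η) ψ)
    (G H : Z → Set d.X) (γ : Γ) :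
    ∀ᵐ z ∂η, νz z (d.act γ '' {y | y ∈ G (ψ y)} ∩ {y | y ∈ H (ψ y)}) =
      νz z (d.act γ '' G z ∩ H z) := by
  filter_upwards [h.ae_ae_eq hψ.1, h.ae_ae_of_ae (hψ.2.2 γ⁻¹)] with z hz hinv
  refine measure_congr (eventuallyEq_set.2 ?_)
  filter_upwards [hz, hinv] with y hy hyinv
  have hyinv' : ψ (d.act γ⁻¹ y) = z := hyinv.trans hy
  simp [MPAction.image_act, hy, hyinv']

end IsDisintegration

theorem MPAction.WC.of_forall_fiber {b d : MPAction Γ} {Z : Type} [MeasurableSpace Z]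
    [StandardBorelSpace Z] {η : Measure Z} [IsProbabilityMeasure η] {φ : b.X → Z}
    {ψ : d.X → Z} {μz : Z → Measure b.X} {νz : Z → Measure d.X}
    (hμz : IsDisintegration b η φ μz) (hψ : IsFactorVia d (trivialAction Γ Z η) ψ)
    (hνz : IsDisintegration d η ψ νz) (h : ∀ z, WCgen b.act (μz z) d.act (νz z)) :
    b.WC d := by
  classical
  intro k A hA F ε hε
  have := nonempty_of_isProbabilityMeasure b.μ
  obtain ⟨k, rfl⟩ := hA.exists_eq_succ
  have := hμz.1
  have := hνz.1
  obtain ⟨Q, hQ, hQstats⟩ := exists_seq_isPartition_statsClose d b.act k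
  have hgood : ∀ z, ∃ n, StatsClose b.act (μz z) A d.act (νz z) (Q n) F (ε / 2) :=
    fun z => hQstats _ _ (h z) A hA F _ (half_pos hε)
  obtain ⟨N, hN, hNgood⟩ : ∃ N : Z → ℕ, Measurable N ∧
      ∀ z, StatsClose b.act (μz z) A d.act (νz z) (Q (N z)) F (ε / 2) :=
    ⟨_, measurable_find hgood fun n => measurableSet_setOf_statsClose hμz.measurable
      hνz.measurable (b.measurableSet_image_act_inter hA) (d.measurableSet_image_act_inter (hQ n))
      F _, fun z => Nat.find_spec (hgood z)⟩
  have hB := isPartition_glue hQ (f := fun y => N (ψ y)) (hN.comp hψ.1)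
  have hAγ := b.measurableSet_image_act_inter hA
  have hBγ := d.measurableSet_image_act_inter hB
  refine ⟨_, hB, fun γ hγ i j => ?_⟩
  rw [hμz.2.2.2 _ (hAγ γ i j), hνz.2.2.2 _ (hBγ γ i j)]
  refine (abs_toReal_lintegral_sub_le (hμz.2.1 _ (hAγ γ i j)) (hνz.2.1 _ (hBγ γ i j))
    (fun _ => prob_le_one) (fun _ => prob_le_one) ?_).trans_lt (half_lt_self hε)
  filter_upwards [hνz.ae_measure_image_act_inter_glue hψ (fun z => Q (N z) i)
    (fun z => Q (N z) j) γ] with z hz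
  rw [hz]
  exact (hNgood z γ hγ i j).le

section Transfer

variable {Y : Type} [MeasurableSpace Y]

theorem WCgen.of_factor_source {a a' : MPAction Γ} {μ : Measure a.X} {μ' : Measure a'.X}
    {actB : Γ → Y → Y} {ν : Measure Y} {e : a.X → a'.X} (he : Measurable e)
    (he_equiv : ∀ γ x, e (a.act γ x) = a'.act γ (e x)) (hμ : μ.map e = μ')
    (h : WCgen a.act μ actB ν) : WCgen a'.act μ' actB ν := by
  intro k A hA F ε hε
  obtain ⟨B, hB, hAB⟩ := h k _ (hA.preimage he) F ε hε
  refine ⟨B, hB, fun γ hγ i j => ?_⟩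
  rw [← hμ, Measure.map_apply he (a'.measurableSet_image_act_inter hA γ i j),
    MPAction.preimage_image_act_inter he_equiv]
  exact hAB γ hγ i j

theorem WCgen.of_factor_target {d d' : MPAction Γ} {ν : Measure d.X} {ν' : Measure d'.X}
    {actA : Γ → Y → Y} {μ : Measure Y} {π : d'.X → d.X} (hπ : Measurable π)
    (hπ_equiv : ∀ γ y, π (d'.act γ y) = d.act γ (π y)) (hν : ν'.map π = ν)
    (h : WCgen actA μ d.act ν) : WCgen actA μ d'.act ν' := by
  intro k A hA F ε hε
  obtain ⟨B, hB, hAB⟩ := h k A hA F ε hε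
  refine ⟨fun i => π ⁻¹' B i, hB.preimage hπ, fun γ hγ i j => ?_⟩
  rw [← MPAction.preimage_image_act_inter hπ_equiv,
    ← Measure.map_apply hπ (d.measurableSet_image_act_inter hB γ i j), hν]
  exact hAB γ hγ i j

end Transfer

section TrivialProduct

variable {Z : Type} [MeasurableSpace Z] [StandardBorelSpace Z] {η : Measure Z}
  [IsProbabilityMeasure η]

theorem isFactorVia_trivialAction_prod_fst (a : MPAction Γ) :
    IsFactorVia ((trivialAction Γ Z η).prod a) (trivialAction Γ Z η) Prod.fst :=
  ⟨measurable_fst, show (η.prod a.μ).map Prod.fst = η by simp,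
    fun _ => ae_of_all _ fun _ => rfl⟩

theorem isDisintegration_trivialAction_prod_fst (a : MPAction Γ) :
    IsDisintegration ((trivialAction Γ Z η).prod a) η Prod.fst
      fun z => (Measure.dirac z).prod a.μ := by
  have happly : ∀ z {s : Set (Z × a.X)}, MeasurableSet s →
      (Measure.dirac z).prod a.μ s = a.μ (Prod.mk z ⁻¹' s) := fun z s hs => by
    rw [Measure.dirac_prod, Measure.map_apply measurable_prodMk_left hs]
  have hmeas : ∀ s : Set (Z × a.X), MeasurableSet s →
      Measurable fun z => (Measure.dirac z).prod a.μ s := fun s hs => by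
    simp_rw [happly _ hs]
    exact measurable_measure_prodMk_left hs
  have hfibre : ∀ z, (Measure.dirac z).prod a.μ (Prod.fst ⁻¹' {z}) = 1 := fun z => by
    rw [happly z (measurable_fst (measurableSet_singleton z)),
      show Prod.mk z ⁻¹' (Prod.fst ⁻¹' {z}) = (univ : Set a.X) from eq_univ_of_forall fun _ => rfl,
      measure_univ]
  have hintegral : ∀ s : Set (Z × a.X), MeasurableSet s →
      η.prod a.μ s = ∫⁻ z, (Measure.dirac z).prod a.μ s ∂η := fun s hs => by
    rw [Measure.prod_apply hs]
    simp_rw [happly _ hs]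
  exact ⟨fun z => (inferInstance : IsProbabilityMeasure ((Measure.dirac z).prod a.μ)), hmeas,
    ae_of_all _ hfibre, hintegral⟩

theorem MPAction.WC.trivialAction_prod_of_forall_fiber {b d : MPAction Γ} {ψ : d.X → Z}
    {νz : Z → Measure d.X} (hψ : IsFactorVia d (trivialAction Γ Z η) ψ)
    (hνz : IsDisintegration d η ψ νz) (h : ∀ z, WCgen b.act b.μ d.act (νz z)) :
    ((trivialAction Γ Z η).prod b).WC d :=
  .of_forall_fiber (isDisintegration_trivialAction_prod_fst b) hψ hνz fun z =>
    (h z).of_factor_source measurable_prodMk_left (fun _ _ => rfl) (Measure.dirac_prod z).symm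

theorem MPAction.WC.to_trivialAction_prod_of_forall_fiber {b d : MPAction Γ} {φ : b.X → Z}
    {μz : Z → Measure b.X} (hμz : IsDisintegration b η φ μz)
    (h : ∀ z, WCgen b.act (μz z) d.act d.μ) : b.WC ((trivialAction Γ Z η).prod d) :=
  .of_forall_fiber hμz (isFactorVia_trivialAction_prod_fst d)
    (isDisintegration_trivialAction_prod_fst d) fun z =>
      (h z).of_factor_target measurable_snd (fun _ _ => rfl)
        (show ((Measure.dirac z).prod d.μ : Measure (Z × d.X)).map Prod.snd = d.μ by simp)

end TrivialProduct

theorem stmt13_general (Γ : Type) [Group Γ]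
    (Z : Type) [MeasurableSpace Z] [StandardBorelSpace Z] (η : Measure Z)
    [IsProbabilityMeasure η]
    (b : MPAction Γ) (φ : b.X → Z) (hφ : IsFactorVia b (trivialAction Γ Z η) φ)
    (d : MPAction Γ) (ψ : d.X → Z) (hψ : IsFactorVia d (trivialAction Γ Z η) ψ)
    (μz : Z → Measure b.X) (hμz : IsDisintegration b η φ μz)
    (νz : Z → Measure d.X) (hνz : IsDisintegration d η ψ νz) :
    ((∀ z : Z, WCgen b.act (μz z) d.act (νz z)) → b.WC d) ∧
    (((∀ z : Z, WCgen b.act b.μ d.act (νz z)) → ((trivialAction Γ Z η).prod b).WC d) ∧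
      ((∀ z : Z, WCgen b.act (μz z) d.act d.μ) → b.WC ((trivialAction Γ Z η).prod d))) ∧
    (((∀ z : Z, WCgen b.act (μz z) d.act (νz z) ∧ WCgen d.act (νz z) b.act (μz z)) →
        b.WE d) ∧
      ((∀ z : Z, WCgen b.act b.μ d.act (νz z) ∧ WCgen d.act (νz z) b.act b.μ) →
        ((trivialAction Γ Z η).prod b).WE d)) :=
  ⟨.of_forall_fiber hμz hψ hνz,
    ⟨.trivialAction_prod_of_forall_fiber hψ hνz, .to_trivialAction_prod_of_forall_fiber hμz⟩,
    fun h => ⟨.of_forall_fiber hμz hψ hνz fun z => (h z).1,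
      .of_forall_fiber hνz hφ hμz fun z => (h z).2⟩,
    fun h => ⟨.trivialAction_prod_of_forall_fiber hψ hνz fun z => (h z).1,
      .to_trivialAction_prod_of_forall_fiber hνz fun z => (h z).2⟩⟩

/-- **Theorem (Tucker-Drob, Theorem 2.3).** Let `φ : b → ι_η` and `ψ : d → ι_η` be factor
maps onto the identity action on `(Z, η)`, with disintegrations `μ = ∫ μ_z dη` and
`ν = ∫ ν_z dη`, and set `b_z = Γ ↷ (X, μ_z)`, `d_z = Γ ↷ (Y, ν_z)`.  Then:
(1) if `b_z ≺ d_z` for all `z` then `b ≺ d`;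
(2) if `b ≺ d_z` for all `z` then `ι_η × b ≺ d`, and if `b_z ≺ d` for all `z` then
`b ≺ ι_η × d`;
(3) if `b_z ∼ d_z` for all `z` then `b ∼ d`, and if `b ∼ d_z` for all `z` then
`ι_η × b ∼ d`. -/
theorem stmt13 (Γ : Type) [Group Γ] [Countable Γ]
    (Z : Type) [MeasurableSpace Z] [StandardBorelSpace Z] (η : Measure Z)
    [IsProbabilityMeasure η]
    (b : MPAction Γ) (φ : b.X → Z) (hφ : IsFactorVia b (trivialAction Γ Z η) φ)
    (d : MPAction Γ) (ψ : d.X → Z) (hψ : IsFactorVia d (trivialAction Γ Z η) ψ)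
    (μz : Z → Measure b.X) (hμz : IsDisintegration b η φ μz)
    (νz : Z → Measure d.X) (hνz : IsDisintegration d η ψ νz) :
    ((∀ z : Z, WCgen b.act (μz z) d.act (νz z)) → b.WC d) ∧
    (((∀ z : Z, WCgen b.act b.μ d.act (νz z)) → ((trivialAction Γ Z η).prod b).WC d) ∧
      ((∀ z : Z, WCgen b.act (μz z) d.act d.μ) → b.WC ((trivialAction Γ Z η).prod d))) ∧
    (((∀ z : Z, WCgen b.act (μz z) d.act (νz z) ∧ WCgen d.act (νz z) b.act (μz z)) →
        b.WE d) ∧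
      ((∀ z : Z, WCgen b.act b.μ d.act (νz z) ∧ WCgen d.act (νz z) b.act b.μ) →
        ((trivialAction Γ Z η).prod b).WE d)) :=
  stmt13_general Γ Z η b φ hφ d ψ hψ μz hμz νz hνz
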